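/- arXiv:2002.02228 — 3 statements merged into one kernel-verified Lean document; each statement's English description precedes it below -/
import Mathlib

section
/- Let A₁ and A₂ be two non-ground, simple, covering literals each containing a compound term, and suppose A₁ and A₂ are unifiable by an mgu σ. Then the compound terms of A₁ and A₂ match each other: whenever a compound term occurs at some argument position of A₁, the argument of A₂ at the same position is a compound term, and vice versa. -/
/-!
Common formalization of first-order clausal logic (without equality), following
"Resolution-based query answering and rewriting for the (loosely) guarded fragment".
-/

set_option linter.unusedVariables false

namespace QGF

/-- Symbols: function symbols, constant symbols and predicate symbols, each indexed by ℕ. -/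
inductive Head : Type
  | fn : ℕ → Head
  | cn : ℕ → Head
  | pr : ℕ → Head
  deriving DecidableEq

/-- First-order terms.  A constant `c` is represented as `Term.app (Head.cn c) []`. -/
inductive Term : Type
  | var : ℕ → Term
  | app : Head → List Term → Term

namespace Term

def isVar : Term → Prop
  | var _ => True
  | _ => False

def isConst : Term → Prop
  | app (.cn _) [] => True
  | _ => False

/-- A compound term is a term that is neither a variable nor a constant. -/
def isCompound (t : Term) : Prop := ¬ t.isVar ∧ ¬ t.isConst

/-- Occurrence of a variable in a term. -/
inductive HasVar : Term → ℕ → Prop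
  | var (x : ℕ) : HasVar (var x) x
  | app {h : Head} {ts : List Term} {x : ℕ} {t : Term} :
      t ∈ ts → HasVar t x → HasVar (app h ts) x

def vars (t : Term) : Set ℕ := {x | t.HasVar x}

/-- Subterm relation. -/
inductive SubtermOf : Term → Term → Prop
  | refl (t : Term) : SubtermOf t t
  | app {s : Term} {h : Head} {ts : List Term} {t : Term} :
      t ∈ ts → SubtermOf s t → SubtermOf s (app h ts)

/-- Depth of a term: variables and constants have depth 0. -/
def depth : Term → ℕ
  | var _ => 0
  | app _ ts => (ts.attach.map fun t => depth t.1 + 1).foldr max 0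
  decreasing_by
    have := List.sizeOf_lt_of_mem t.2
    simp only [Term.app.sizeOf_spec]
    omega

/-- Applying a substitution to a term. -/
def subst (σ : ℕ → Term) : Term → Term
  | var x => σ x
  | app h ts => app h (ts.attach.map fun t => subst σ t.1)
  decreasing_by
    have := List.sizeOf_lt_of_mem t.2
    simp only [Term.app.sizeOf_spec]
    omega

def isGround (t : Term) : Prop := t.vars = ∅

/-- An argument is flat if it is a variable or a constant. -/
def flatArg (t : Term) : Prop := t.isVar ∨ t.isConst

/-- An argument is simple if it is a variable, a constant, or a compound term all of
whose arguments are variables or constants. -/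
def simpleArg : Term → Prop
  | var _ => True
  | app _ ts => ∀ u ∈ ts, flatArg u

end Term

/-- Substitutions. -/
abbrev Subst := ℕ → Term

/-- Atoms. -/
structure Atom where
  pred : ℕ
  args : List Term

namespace Atom

def subst (σ : Subst) (a : Atom) : Atom := ⟨a.pred, a.args.map (Term.subst σ)⟩

def vars (a : Atom) : Set ℕ := {x | ∃ t ∈ a.args, x ∈ t.vars}

def flat (a : Atom) : Prop := ∀ t ∈ a.args, t.flatArg

def simple (a : Atom) : Prop := ∀ t ∈ a.args, t.simpleArg

def ground (a : Atom) : Prop := a.vars = ∅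

/-- An atom `P(t₁,…,tₙ)` viewed as the term with head the predicate symbol `P`. -/
def toTerm (a : Atom) : Term := .app (.pr a.pred) a.args

end Atom

/-- Literals. -/
structure Lit where
  pos : Bool
  atom : Atom

def Lit.mkPos (a : Atom) : Lit := ⟨true, a⟩
def Lit.mkNeg (a : Atom) : Lit := ⟨false, a⟩

namespace Lit

def subst (σ : Subst) (L : Lit) : Lit := ⟨L.pos, L.atom.subst σ⟩

def vars (L : Lit) : Set ℕ := L.atom.vars

def ground (L : Lit) : Prop := L.vars = ∅

def flat (L : Lit) : Prop := L.atom.flat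

def simple (L : Lit) : Prop := L.atom.simple

/-- Occurrence of a term in a literal (as a subterm of an argument). -/
def hasTerm (L : Lit) (t : Term) : Prop := ∃ u ∈ L.atom.args, t.SubtermOf u

def hasCompound (L : Lit) : Prop := ∃ t, L.hasTerm t ∧ t.isCompound

/-- A literal is covering if every compound term occurring in it contains exactly the
variables of the literal. -/
def covering (L : Lit) : Prop := ∀ t, L.hasTerm t → t.isCompound → t.vars = L.vars

end Lit

/-- A clause is a (multi)set of literals, represented as a list, read disjunctively,
with all variables implicitly universally quantified. -/
abbrev Clause := List Lit

namespace Clause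

def subst (σ : Subst) (C : Clause) : Clause := C.map (Lit.subst σ)

def vars (C : Clause) : Set ℕ := {x | ∃ L ∈ C, x ∈ L.vars}

def ground (C : Clause) : Prop := vars C = ∅

def flat (C : Clause) : Prop := ∀ L ∈ C, L.flat

def simple (C : Clause) : Prop := ∀ L ∈ C, L.simple

def hasTerm (C : Clause) (t : Term) : Prop := ∃ L ∈ C, L.hasTerm t

/-- A clause is covering if every compound term occurring in it contains exactly the
variables of the clause. -/
def covering (C : Clause) : Prop := ∀ t, hasTerm C t → t.isCompound → t.vars = vars C

def hasNegCompound (C : Clause) : Prop := ∃ L ∈ C, L.pos = false ∧ L.hasCompound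

def hasCompound (C : Clause) : Prop := ∃ L ∈ C, L.hasCompound

/-- The predicate symbols occurring in a clause. -/
def preds (C : Clause) : Set ℕ := {p | ∃ L ∈ C, L.atom.pred = p}

/-- The depth of a clause: the maximal depth of a term occurring in it. -/
def depth (C : Clause) : ℕ :=
  (C.map fun L => (L.atom.args.map Term.depth).foldr max 0).foldr max 0

end Clause

/-- `L` is a guard of `C`:  a negative flat literal of `C` containing all variables of `C`. -/
def Lit.isGuardOf (L : Lit) (C : Clause) : Prop :=
  L ∈ C ∧ L.pos = false ∧ L.flat ∧ L.vars = Clause.vars C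

/-- Guarded clauses (Definition 3.3). -/
def Clause.guarded (C : Clause) : Prop :=
  Clause.simple C ∧ Clause.covering C ∧ (Clause.ground C ∨ ∃ L : Lit, L.isGuardOf C)

/-- `G` is a set of loose guards of `C`. -/
def Clause.looseGuardsOf (G : List Lit) (C : Clause) : Prop :=
  (∀ L ∈ G, L ∈ C ∧ L.pos = false ∧ L.flat) ∧
  (∀ x ∈ Clause.vars C, ∃ L ∈ G, x ∈ L.vars) ∧
  (∀ x ∈ Clause.vars C, ∀ y ∈ Clause.vars C, x ≠ y → ∃ L ∈ G, x ∈ L.vars ∧ y ∈ L.vars)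

/-- Loosely guarded clauses (Definition 3.3). -/
def Clause.looselyGuarded (C : Clause) : Prop :=
  Clause.simple C ∧ Clause.covering C ∧
    (Clause.ground C ∨ ∃ G : List Lit, Clause.looseGuardsOf G C)

/-- Query clauses: flat clauses containing only negative literals (Definition 3.2). -/
def Clause.query (C : Clause) : Prop := Clause.flat C ∧ ∀ L ∈ C, L.pos = false

/-! ### Semantics -/

/-- First-order interpretations. -/
structure Interp : Type 1 where
  dom : Type
  nonempty : Nonempty dom
  fn : Head → List dom → dom
  pr : ℕ → List dom → Prop

def Term.eval (I : Interp) (ν : ℕ → I.dom) : Term → I.dom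
  | .var x => ν x
  | .app h ts => I.fn h (ts.attach.map fun t => Term.eval I ν t.1)
  decreasing_by
    have := List.sizeOf_lt_of_mem t.2
    simp only [Term.app.sizeOf_spec]
    omega

def Atom.holds (I : Interp) (ν : ℕ → I.dom) (a : Atom) : Prop :=
  I.pr a.pred (a.args.map (Term.eval I ν))

def Lit.holds (I : Interp) (ν : ℕ → I.dom) (L : Lit) : Prop :=
  if L.pos then L.atom.holds I ν else ¬ L.atom.holds I ν

/-- A clause holds under a valuation if one of its literals does. -/
def Clause.holdsUnder (I : Interp) (ν : ℕ → I.dom) (C : Clause) : Prop :=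
  ∃ L ∈ C, L.holds I ν

/-- A clause is true in an interpretation if its universal closure holds. -/
def Clause.trueIn (I : Interp) (C : Clause) : Prop := ∀ ν, Clause.holdsUnder I ν C

def Interp.models (I : Interp) (N : Set Clause) : Prop := ∀ C ∈ N, Clause.trueIn I C

/-- Satisfiability of a set of clauses. -/
def satisfiable (N : Set Clause) : Prop := ∃ I : Interp, I.models N

/-- Logical consequence:  every model of `N` is a model of `C`. -/
def entails (N : Set Clause) (C : Clause) : Prop :=
  ∀ I : Interp, I.models N → Clause.trueIn I C

/-- A tautology is a clause true in every interpretation. -/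
def Tautology (C : Clause) : Prop := ∀ (I : Interp) (ν : ℕ → I.dom), Clause.holdsUnder I ν C

/-- Two clauses are variants if each is an instance of the other. -/
def Variant (C D : Clause) : Prop :=
  (∃ σ : Subst, Clause.subst σ C = D) ∧ (∃ ρ : Subst, Clause.subst ρ D = C)

/-! ### Unification -/

def Unifies (σ : Subst) (a b : Atom) : Prop := a.subst σ = b.subst σ

/-- Most general unifiers. -/
def IsMGU (σ : Subst) (a b : Atom) : Prop :=
  Unifies σ a b ∧ ∀ θ : Subst, Unifies θ a b → ∃ ρ : Subst, ∀ x, (σ x).subst ρ = θ x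

def Lit.unifies (σ : Subst) (L1 L2 : Lit) : Prop := L1.subst σ = L2.subst σ

def Lit.isMGU (σ : Subst) (L1 L2 : Lit) : Prop :=
  Lit.unifies σ L1 L2 ∧ ∀ θ : Subst, Lit.unifies θ L1 L2 → ∃ ρ : Subst, ∀ x, (σ x).subst ρ = θ x

def UnifiesAll (σ : Subst) (ps : List (Atom × Atom)) : Prop :=
  ∀ p ∈ ps, Atom.subst σ p.1 = Atom.subst σ p.2

/-- Simultaneous most general unifiers. -/
def IsSimMGU (σ : Subst) (ps : List (Atom × Atom)) : Prop :=
  UnifiesAll σ ps ∧ ∀ θ : Subst, UnifiesAll θ ps → ∃ ρ : Subst, ∀ x, (σ x).subst ρ = θ x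

/-! ### Condensation, separability -/

/-- `D` is a subclause of `C` (as multisets). -/
def SubClause (D C : Clause) : Prop := (↑D : Multiset Lit) ≤ (↑C : Multiset Lit)

/-- `D` is a condensation of `C`: a proper subclause of `C` which is an instance of `C`
(up to duplicate literals). -/
def IsCondensation (D C : Clause) : Prop :=
  SubClause D C ∧ D.length < C.length ∧
    ∃ σ : Subst, ∀ L : Lit, L ∈ D ↔ L ∈ Clause.subst σ C

/-- A clause `C ∨ D` is separable into `C` and `D` if both are non-empty and neither
variable set is included in the other. -/
def Separable (C D : Clause) : Prop :=
  C ≠ [] ∧ D ≠ [] ∧ ¬ Clause.vars C ⊆ Clause.vars D ∧ ¬ Clause.vars D ⊆ Clause.vars C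

/-- A clause is indecomposable if it cannot be partitioned into two non-empty
variable-disjoint subclauses. -/
def Clause.indecomposable (C : Clause) : Prop :=
  ¬ ∃ D E : Clause, D ≠ [] ∧ E ≠ [] ∧
      (↑C : Multiset Lit) = (↑D : Multiset Lit) + (↑E : Multiset Lit) ∧
      Clause.vars D ∩ Clause.vars E = ∅

/-- The predicate symbols occurring in a clause set. -/
def SetPreds (N : Set Clause) : Set ℕ := {p | ∃ C ∈ N, p ∈ Clause.preds C}

/-! ### Orderings -/

namespace Head

def rank : Head → ℕ
  | .pr _ => 0
  | .cn _ => 1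
  | .fn _ => 2

def idx : Head → ℕ
  | .pr n => n
  | .cn n => n
  | .fn n => n

/-- The precedence: every function symbol is greater than every constant, and every
constant is greater than every predicate symbol. -/
def prec (g h : Head) : Prop := g.rank < h.rank ∨ (g.rank = h.rank ∧ g.idx < h.idx)

end Head

/-- The lexicographic path ordering on terms induced by the precedence `Head.prec`.
`LpoGT s t` means `s ≻_lpo t`. -/
inductive LpoGT : Term → Term → Prop
  | subRefl {h : Head} {ss : List Term} {t : Term} :
      t ∈ ss → LpoGT (.app h ss) t
  | sub {h : Head} {ss : List Term} {t : Term} (s : Term) :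
      s ∈ ss → LpoGT s t → LpoGT (.app h ss) t
  | prec {h g : Head} {ss ts : List Term} :
      Head.prec g h → (∀ t ∈ ts, LpoGT (.app h ss) t) → LpoGT (.app h ss) (.app g ts)
  | lex {h : Head} {ss ts u ss' ts' : List Term} {s t : Term} :
      ss = u ++ s :: ss' → ts = u ++ t :: ts' → LpoGT s t →
      (∀ t' ∈ ts, LpoGT (.app h ss) t') → LpoGT (.app h ss) (.app h ts)

/-- The induced lexicographic path ordering on literals, where a negative literal is
greater than the corresponding positive literal. -/
def Lit.lpoGT (L1 L2 : Lit) : Prop :=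
  LpoGT L1.atom.toTerm L2.atom.toTerm ∨
    (L1.atom.toTerm = L2.atom.toTerm ∧ L1.pos = false ∧ L2.pos = true)

/-- Admissible orderings on literals; `ord L L'` means `L ≻ L'`. -/
structure Admissible (ord : Lit → Lit → Prop) : Prop where
  trans : ∀ {a b c : Lit}, ord a b → ord b c → ord a c
  irrefl : ∀ a : Lit, ¬ ord a a
  totalGround : ∀ a b : Lit, a.ground → b.ground → a = b ∨ ord a b ∨ ord b a
  wfGround : WellFounded fun a b : Lit => a.ground ∧ b.ground ∧ ord b a
  liftable : ∀ (a b : Lit) (σ : Subst), ord a b → ord (a.subst σ) (b.subst σ)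
  negGtPos : ∀ a : Atom, a.ground → ord (Lit.mkNeg a) (Lit.mkPos a)
  negCompat : ∀ a b : Atom, a.ground → b.ground →
    ord (Lit.mkPos b) (Lit.mkPos a) → ord (Lit.mkPos b) (Lit.mkNeg a)

/-- The multiset extension of a literal ordering to clauses; `ClauseGT ord C D` means
`C ≻ D`. -/
def ClauseGT (ord : Lit → Lit → Prop) (C D : Clause) : Prop :=
  ∃ X Y Z : Multiset Lit,
    (↑C : Multiset Lit) = Z + X ∧ (↑D : Multiset Lit) = Z + Y ∧ X ≠ 0 ∧
      ∀ y ∈ Y, ∃ x ∈ X, ord x y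

/-- `L` is maximal with respect to a clause `C` (`C` not necessarily containing `L`):
some ground instance of `L` is not smaller than the corresponding instances of the
literals of `C`. -/
def maxIn (ord : Lit → Lit → Prop) (L : Lit) (C : Clause) : Prop :=
  ∃ σ : Subst, Lit.ground (L.subst σ) ∧ Clause.ground (Clause.subst σ C) ∧
    ∀ L' ∈ C, ¬ ord (Lit.subst σ L') (Lit.subst σ L)

/-- `L` is strictly maximal with respect to a clause `C`. -/
def strictMaxIn (ord : Lit → Lit → Prop) (L : Lit) (C : Clause) : Prop :=
  ∃ σ : Subst, Lit.ground (L.subst σ) ∧ Clause.ground (Clause.subst σ C) ∧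
    ∀ L' ∈ C, ord (Lit.subst σ L) (Lit.subst σ L')

/-! ### Redundancy -/

def GroundInstanceOf (D C : Clause) : Prop := (∃ σ : Subst, D = Clause.subst σ C) ∧ Clause.ground D

/-- Redundancy of a clause with respect to a clause set `N`:  every ground instance is
entailed by finitely many smaller ground instances of clauses of `N`. -/
def redundantClause (ord : Lit → Lit → Prop) (N : Set Clause) (C : Clause) : Prop :=
  ∀ D : Clause, GroundInstanceOf D C →
    ∃ S : Finset Clause, (∀ E ∈ S, ∃ C' ∈ N, GroundInstanceOf E C') ∧
      entails (↑S) D ∧ ∀ E ∈ S, ClauseGT ord D E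

/-- An inference is redundant in `N` if a premise is redundant, or its conclusion is
redundant in `N` or belongs to `N`. -/
def RedundantInference (ord : Lit → Lit → Prop) (N : Set Clause)
    (premises : List Clause) (concl : Clause) : Prop :=
  (∃ p ∈ premises, redundantClause ord N p) ∨ redundantClause ord N concl ∨ concl ∈ N

/-! ### Selection and eligibility -/

/-- Selection functions: select a set of negative literals of a clause. -/
def SelFn := Clause → Set Lit

def SelOK (sel : SelFn) : Prop := ∀ C : Clause, ∀ L ∈ sel C, L ∈ C ∧ L.pos = false

/-- A literal is eligible if it is selected, or nothing is selected and it is maximal. -/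
def Eligible (ord : Lit → Lit → Prop) (sel : SelFn) (C : Clause) (L : Lit) : Prop :=
  (sel C = ∅ ∧ L ∈ C ∧ maxIn ord L C) ∨ L ∈ sel C

/-- Eligibility under the refinement T-Refine (Algorithm 1), in the cases not depending
on side premises:  maximal literals for ground clauses and clauses with positive
compound terms, a selected negative compound-term literal, or a selected guard. -/
def EligibleTR (C : Clause) (L : Lit) : Prop :=
  L ∈ C ∧
    ((Clause.ground C ∧ maxIn Lit.lpoGT L C) ∨
     (¬ Clause.ground C ∧ Clause.hasNegCompound C ∧ L.pos = false ∧ L.hasCompound) ∨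
     (¬ Clause.ground C ∧ ¬ Clause.hasNegCompound C ∧ Clause.hasCompound C ∧
        maxIn Lit.lpoGT L C) ∨
     (¬ Clause.ground C ∧ ¬ Clause.hasCompound C ∧ L.isGuardOf C))

/-! ### Top-variable resolution -/

/-- `x` is a top variable of the negative atoms `A i` with respect to the candidate
unifier `σ'`:  the depth of `σ' x` is maximal. -/
def IsTopVar (n : ℕ) (A : Fin n → Atom) (σ' : Subst) (x : ℕ) : Prop :=
  (∃ i, x ∈ (A i).vars) ∧
    ∀ y : ℕ, (∃ i, y ∈ (A i).vars) → (σ' y).depth ≤ (σ' x).depth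

/-- The data of an application of the top-variable resolution rule TRes:
main premise `¬A₁ ∨ … ∨ ¬Aₙ ∨ D`,  side premises `Bᵢ ∨ Dᵢ`,
`σ'` a simultaneous mgu of all `n` pairs used to compute top variables, and
`σ` a simultaneous mgu of the first `m` (top-variable) pairs. -/
structure TResApp where
  n : ℕ
  m : ℕ
  A : Fin n → Atom
  B : Fin n → Atom
  Ds : Fin n → Clause
  D : Clause
  σ' : Subst
  σ : Subst

namespace TResApp

def mainPremise (t : TResApp) : Clause :=
  (List.ofFn fun i => Lit.mkNeg (t.A i)) ++ t.D

def sidePremise (t : TResApp) (i : Fin t.n) : Clause :=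
  Lit.mkPos (t.B i) :: t.Ds i

def sidePremises (t : TResApp) : List Clause := List.ofFn t.sidePremise

def resolvent (t : TResApp) : Clause :=
  Clause.subst t.σ
    ((((List.finRange t.n).filter fun i => i.1 < t.m).flatMap t.Ds) ++
     (((List.finRange t.n).filter fun i => t.m ≤ i.1).map fun i => Lit.mkNeg (t.A i)) ++
     t.D)

/-- Side conditions of the TRes rule. -/
def wf (ord : Lit → Lit → Prop) (t : TResApp) : Prop :=
  0 < t.m ∧ t.m ≤ t.n ∧
  (∀ L ∈ t.D, L.pos = true) ∧
  IsSimMGU t.σ' ((List.finRange t.n).map fun i => (t.A i, t.B i)) ∧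
  IsSimMGU t.σ (((List.finRange t.n).filter fun i => i.1 < t.m).map fun i => (t.A i, t.B i)) ∧
  (∀ i : Fin t.n, i.1 < t.m ↔ ∃ x, IsTopVar t.n t.A t.σ' x ∧ x ∈ (t.A i).vars) ∧
  (∀ i, strictMaxIn ord (Lit.mkPos (t.B i)) (t.Ds i)) ∧
  (∀ i, Clause.vars (t.sidePremise i) ∩ Clause.vars t.mainPremise = ∅) ∧
  (∀ i j, i ≠ j → Clause.vars (t.sidePremise i) ∩ Clause.vars (t.sidePremise j) = ∅)

end TResApp

/-! ### The generating inferences of T-Inf -/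

/-- The conclusion-generating inferences of the top-variable inference system T-Inf:
ordered resolution with selection (Res), ordered factoring (Fact), and top-variable
resolution (TRes). `TInfInf ord sel ps c` means `c` is the conclusion of an inference
with premises `ps`. -/
inductive TInfInf (ord : Lit → Lit → Prop) (sel : SelFn) : List Clause → Clause → Prop
  | res {B A : Atom} {D1 D : Clause} {σ : Subst} :
      IsMGU σ A B →
      sel (Lit.mkPos B :: D1) = ∅ →
      strictMaxIn ord (Lit.mkPos B) D1 →
      Eligible ord sel (Lit.mkNeg A :: D) (Lit.mkNeg A) →
      Clause.vars (Lit.mkPos B :: D1) ∩ Clause.vars (Lit.mkNeg A :: D) = ∅ →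
      TInfInf ord sel [Lit.mkPos B :: D1, Lit.mkNeg A :: D] (Clause.subst σ (D1 ++ D))
  | fact {A1 A2 : Atom} {C : Clause} {σ : Subst} :
      IsMGU σ A1 A2 →
      sel (C ++ [Lit.mkPos A1, Lit.mkPos A2]) = ∅ →
      maxIn ord (Lit.mkPos A1) (C ++ [Lit.mkPos A2]) →
      TInfInf ord sel [C ++ [Lit.mkPos A1, Lit.mkPos A2]] (Clause.subst σ (C ++ [Lit.mkPos A1]))
  | tres (t : TResApp) :
      t.wf ord →
      (∀ i, sel (t.sidePremise i) = ∅) →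
      (∀ i : Fin t.n, i.1 < t.m → Lit.mkNeg (t.A i) ∈ sel t.mainPremise) →
      TInfInf ord sel (t.sidePremises ++ [t.mainPremise]) t.resolvent

/-- `N` is saturated up to redundancy with respect to the inference system `inf`:
every inference from non-redundant premises of `N` is redundant in `N`. -/
def SaturatedUpToRedundancy (ord : Lit → Lit → Prop)
    (inf : List Clause → Clause → Prop) (N : Set Clause) : Prop :=
  ∀ (ps : List Clause) (c : Clause), inf ps c → (∀ p ∈ ps, p ∈ N) →
    RedundantInference ord N ps c


/-! ### Surface literals, chained and isolated variables of query clauses -/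

/-- `L` is a surface literal of `Q`: no other literal of `Q` has a strictly larger
variable set. -/
def SurfaceLit (Q : Clause) (L : Lit) : Prop :=
  L ∈ Q ∧ ∀ L' ∈ Q, ¬ (L.vars ⊂ L'.vars)

/-- `x` is a chained variable of `Q`: it occurs in two distinct surface literals with
different, mutually non-inclusive variable sets. -/
def ChainedVar (Q : Clause) (x : ℕ) : Prop :=
  ∃ L L' : Lit, SurfaceLit Q L ∧ SurfaceLit Q L' ∧ L ≠ L' ∧
    ¬ L.vars ⊆ L'.vars ∧ ¬ L'.vars ⊆ L.vars ∧ x ∈ L.vars ∧ x ∈ L'.vars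

/-- `x` is an isolated variable of `Q`: a variable of `Q` that is not chained. -/
def IsolatedVar (Q : Clause) (x : ℕ) : Prop := x ∈ Clause.vars Q ∧ ¬ ChainedVar Q x

/-- A query clause is isolated-only if all its variables are isolated. -/
def Clause.isolatedOnly (Q : Clause) : Prop := ∀ x ∈ Clause.vars Q, ¬ ChainedVar Q x

/-- A query clause is chained-only if all its variables are chained. -/
def Clause.chainedOnly (Q : Clause) : Prop := ∀ x ∈ Clause.vars Q, ChainedVar Q x

/-! ### The inferences of Q-AR -/

/-- The inferences of Q-AR: the T-Inf inferences together with the separation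
inferences (Sep) and the T-Trans renaming inferences, both introducing fresh,
smaller definer predicate symbols. -/
inductive QARInf (ord : Lit → Lit → Prop) (sel : SelFn) : List Clause → Clause → Prop
  | tinf {ps : List Clause} {c : Clause} : TInfInf ord sel ps c → QARInf ord sel ps c
  | sepL {C D : Clause} {ds : ℕ} {xs : List ℕ} :
      Separable C D → {x | x ∈ xs} = Clause.vars C ∩ Clause.vars D →
      ds ∉ Clause.preds (C ++ D) →
      QARInf ord sel [C ++ D] (Lit.mkNeg ⟨ds, xs.map Term.var⟩ :: C)
  | sepR {C D : Clause} {ds : ℕ} {xs : List ℕ} :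
      Separable C D → {x | x ∈ xs} = Clause.vars C ∩ Clause.vars D →
      ds ∉ Clause.preds (C ++ D) →
      QARInf ord sel [C ++ D] (Lit.mkPos ⟨ds, xs.map Term.var⟩ :: D)
  | ttransDef {E F : Clause} {d : ℕ} {xs : List ℕ} :
      {x | x ∈ xs} = Clause.vars E → d ∉ Clause.preds (F ++ E) →
      QARInf ord sel [F ++ E] (Lit.mkPos ⟨d, xs.map Term.var⟩ :: E)
  | ttransQ {E F : Clause} {d : ℕ} {xs : List ℕ} :
      {x | x ∈ xs} = Clause.vars E → d ∉ Clause.preds (F ++ E) →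
      QARInf ord sel [F ++ E] (F ++ [Lit.mkNeg ⟨d, xs.map Term.var⟩])

/-! ### Q-AR as a transition system on clause sets -/

/-- A single derivation step of the procedure Q-AR on clause sets: adding a
Res/TRes/Fact conclusion, replacement by a condensation, deletion of tautologies and
variants, separation (Sep) and the renaming T-Trans (both with fresh definer
predicate symbols). -/
inductive QARStep : Set Clause → Set Clause → Prop
  | res {N : Set Clause} {A B : Atom} {D1 D : Clause} {σ : Subst} :
      (Lit.mkPos B :: D1) ∈ N → (Lit.mkNeg A :: D) ∈ N → IsMGU σ A B →
      QARStep N (insert (Clause.subst σ (D1 ++ D)) N)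
  | tres {N : Set Clause} (t : TResApp) :
      (∀ i, t.sidePremise i ∈ N) → t.mainPremise ∈ N →
      (∀ i : Fin t.n, i.1 < t.m → Atom.subst t.σ (t.A i) = Atom.subst t.σ (t.B i)) →
      QARStep N (insert t.resolvent N)
  | fact {N : Set Clause} {A1 A2 : Atom} {C : Clause} {σ : Subst} :
      (C ++ [Lit.mkPos A1, Lit.mkPos A2]) ∈ N → IsMGU σ A1 A2 →
      QARStep N (insert (Clause.subst σ (C ++ [Lit.mkPos A1])) N)
  | conden {N : Set Clause} {C D : Clause} :
      C ∈ N → IsCondensation D C → QARStep N (insert D (N \ {C}))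
  | deleteTaut {N : Set Clause} {C : Clause} :
      C ∈ N → Tautology C → QARStep N (N \ {C})
  | deleteVariant {N : Set Clause} {C C' : Clause} :
      C ∈ N → C' ∈ N → C ≠ C' → Variant C C' → QARStep N (N \ {C})
  | sep {N : Set Clause} {C D : Clause} {ds : ℕ} {xs : List ℕ} :
      (C ++ D) ∈ N → Separable C D → {x | x ∈ xs} = Clause.vars C ∩ Clause.vars D →
      ds ∉ SetPreds N →
      QARStep N (insert (Lit.mkNeg ⟨ds, xs.map Term.var⟩ :: C)
        (insert (Lit.mkPos ⟨ds, xs.map Term.var⟩ :: D) (N \ {C ++ D})))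
  | ttrans {N : Set Clause} {E F : Clause} {d : ℕ} {xs : List ℕ} :
      (F ++ E) ∈ N → {x | x ∈ xs} = Clause.vars E → d ∉ SetPreds N →
      QARStep N (insert (F ++ [Lit.mkNeg ⟨d, xs.map Term.var⟩])
        (insert (Lit.mkPos ⟨d, xs.map Term.var⟩ :: E) (N \ {F ++ E})))

/-! Suppose the argument `t` of `L₁` at position `p` is compound but the argument `u` of `L₂`
there is not. Since `tσ = uσ` is compound, `u` is a variable `x`, so `σx = tσ`. Let `s` be a
compound argument of `L₂`, at position `q`. By covering `x` occurs in `s`, and by simplicity as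
an argument of `s`, so `σx` is an argument of `sσ = vσ`, where `v` is the argument of `L₁` at
`q`. As `v` is simple, that argument of `vσ` is a constant or no larger than `σy` for some
variable `y` of `v`. The first is impossible because `σx = tσ` is compound; in the second, by
covering `y` occurs in the compound term `t`, so `σy` is strictly smaller than `tσ = σx`. -/

namespace Term

@[simp]
lemma subst_var (σ : Subst) (x : ℕ) : (var x).subst σ = σ x := by
  rw [subst]

@[simp]
lemma subst_app (σ : Subst) (h : Head) (ts : List Term) :
    (app h ts).subst σ = app h (ts.map (subst σ)) := by
  rw [subst, List.map_attach_eq_pmap, List.pmap_eq_map]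

lemma isVar_iff {t : Term} : t.isVar ↔ ∃ x, t = var x := by
  cases t <;> simp [isVar]

lemma isConst_iff {t : Term} : t.isConst ↔ ∃ n, t = app (.cn n) [] := by
  rcases t with _ | ⟨_ | _ | _, _ | _⟩ <;> simp [isConst]

lemma flatArg_of_not_isCompound {t : Term} (ht : ¬ t.isCompound) : t.flatArg := by
  unfold isCompound at ht
  unfold flatArg
  tauto

lemma isConst.subst_eq {t : Term} (ht : t.isConst) (σ : Subst) : t.subst σ = t := by
  obtain ⟨n, rfl⟩ := isConst_iff.1 ht
  simp

lemma isCompound.subst {t : Term} (ht : t.isCompound) (σ : Subst) : (t.subst σ).isCompound := by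
  rcases t with x | ⟨h, ts⟩
  · exact absurd trivial ht.1
  refine ⟨by simp [isVar], fun hc => ht.2 (isConst_iff.2 ?_)⟩
  obtain ⟨n, hn⟩ := isConst_iff.1 hc
  simp only [subst_app, app.injEq, List.map_eq_nil_iff] at hn
  exact ⟨n, by rw [hn.1, hn.2]⟩

lemma SubtermOf.isCompound {s t : Term} (hst : s.SubtermOf t) (hs : s.isCompound) :
    t.isCompound := by
  cases hst with
  | refl => exact hs
  | app hmem _ =>
    refine ⟨by simp [isVar], fun hc => ?_⟩
    obtain ⟨n, hn⟩ := isConst_iff.1 hc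
    simp only [app.injEq] at hn
    simp [hn.2] at hmem

lemma sizeOf_lt_of_mem_app {a : Term} {h : Head} {as : List Term} (ha : a ∈ as) :
    sizeOf a < sizeOf (app h as) := by
  have := List.sizeOf_lt_of_mem ha
  simp only [app.sizeOf_spec]
  omega

lemma HasVar.sizeOf_le_subst {t : Term} {x : ℕ} (hx : t.HasVar x) (σ : Subst) :
    sizeOf (σ x) ≤ sizeOf (t.subst σ) := by
  induction hx with
  | var => simp
  | @app h ts _ t ht _ ih =>
    rw [subst_app]
    exact ih.trans (sizeOf_lt_of_mem_app (List.mem_map_of_mem ht)).le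

lemma HasVar.sizeOf_lt_subst {t : Term} {x : ℕ} (hx : t.HasVar x) (ht : ¬ t.isVar)
    (σ : Subst) : sizeOf (σ x) < sizeOf (t.subst σ) := by
  cases hx with
  | var => exact absurd trivial ht
  | app hmem hx =>
    rw [subst_app]
    exact (hx.sizeOf_le_subst σ).trans_lt (sizeOf_lt_of_mem_app (List.mem_map_of_mem hmem))

def IsArgOf (a t : Term) : Prop := ∃ h as, t = app h as ∧ a ∈ as

lemma HasVar.isArgOf_subst {s : Term} {x : ℕ} (hx : s.HasVar x) (hs : s.simpleArg)
    (hsv : ¬ s.isVar) (σ : Subst) : (σ x).IsArgOf (s.subst σ) := by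
  cases hx with
  | var => exact absurd trivial hsv
  | @app h ss _ w hw hxw =>
    refine ⟨h, _, subst_app σ h ss, ?_⟩
    rcases hs w hw with hwv | hwc
    · obtain ⟨y, rfl⟩ := isVar_iff.1 hwv
      cases hxw
      simpa using List.mem_map_of_mem (f := subst σ) hw
    · obtain ⟨n, rfl⟩ := isConst_iff.1 hwc
      nomatch hxw

lemma isConst_or_sizeOf_le_of_isArgOf_subst {v a : Term} {σ : Subst} (hv : v.simpleArg)
    (ha : a.IsArgOf (v.subst σ)) : a.isConst ∨ ∃ y ∈ v.vars, sizeOf a ≤ sizeOf (σ y) := by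
  obtain ⟨h, as, hvσ, hmem⟩ := ha
  rcases v with y | ⟨g, vs⟩
  · rw [subst_var] at hvσ
    exact .inr ⟨y, .var y, (hvσ ▸ sizeOf_lt_of_mem_app hmem).le⟩
  · simp only [subst_app, app.injEq] at hvσ
    obtain ⟨w, hw, rfl⟩ := List.mem_map.1 (hvσ.2 ▸ hmem)
    rcases hv w hw with hwv | hwc
    · obtain ⟨y, rfl⟩ := isVar_iff.1 hwv
      exact .inr ⟨y, .app hw (.var y), by simp⟩
    · exact .inl ((hwc.subst_eq σ).symm ▸ hwc)

end Term

namespace Lit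

lemma unifies.getElem?_map_subst {σ : Subst} {L₁ L₂ : Lit} (h : L₁.unifies σ L₂) (p : ℕ) :
    L₁.atom.args[p]?.map (Term.subst σ) = L₂.atom.args[p]?.map (Term.subst σ) := by
  have hargs := congrArg (fun L : Lit => L.atom.args[p]?) h
  simpa [Lit.subst, Atom.subst] using hargs

lemma exists_isCompound_arg {L : Lit} (hL : L.hasCompound) :
    ∃ s ∈ L.atom.args, s.isCompound := by
  obtain ⟨t, ⟨s, hs, hts⟩, htc⟩ := hL
  exact ⟨s, hs, hts.isCompound htc⟩

lemma isCompound_of_unifies {σ : Subst} {L₁ L₂ : Lit} (hs₁ : L₁.simple) (hs₂ : L₂.simple)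
    (hcov₁ : L₁.covering) (hcov₂ : L₂.covering) (hc₂ : L₂.hasCompound) (hσ : L₁.unifies σ L₂)
    {p : ℕ} {t u : Term} (ht : L₁.atom.args[p]? = some t) (hu : L₂.atom.args[p]? = some u)
    (htc : t.isCompound) : u.isCompound := by
  by_contra huc
  have htu : t.subst σ = u.subst σ := by simpa [ht, hu] using hσ.getElem?_map_subst p
  obtain ⟨x, rfl⟩ : ∃ x, u = .var x := by
    rcases Term.flatArg_of_not_isCompound huc with huv | huc'
    · exact Term.isVar_iff.1 huv
    · exact (huc (huc'.subst_eq σ ▸ htu ▸ htc.subst σ)).elim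
  rw [Term.subst_var] at htu
  have ht_mem := List.mem_of_getElem? ht
  have hvars_t : t.vars = L₁.vars := hcov₁ t ⟨t, ht_mem, .refl t⟩ htc
  obtain ⟨s, hs_mem, hsc⟩ := exists_isCompound_arg hc₂
  obtain ⟨q, hq⟩ := List.mem_iff_getElem?.1 hs_mem
  obtain ⟨v, hv, hvs⟩ := Option.map_eq_some_iff.1 <|
    (hσ.getElem?_map_subst q).trans (by rw [hq]; rfl)
  have hx : s.HasVar x := by
    have hx : x ∈ L₂.vars := ⟨.var x, List.mem_of_getElem? hu, .var x⟩
    rwa [← hcov₂ s ⟨s, hs_mem, .refl s⟩ hsc] at hx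
  have harg := hvs ▸ hx.isArgOf_subst (hs₂ s hs_mem) hsc.1 σ
  rcases Term.isConst_or_sizeOf_le_of_isArgOf_subst (hs₁ v (List.mem_of_getElem? hv)) harg with
    hconst | ⟨y, hy, hle⟩
  · exact (htu ▸ htc.subst σ).2 hconst
  · have hy_t : y ∈ t.vars := by
      rw [hvars_t]
      exact ⟨v, List.mem_of_getElem? hv, hy⟩
    have hlt := Term.HasVar.sizeOf_lt_subst hy_t htc.1 σ
    rw [htu] at hlt
    omega

end Lit

theorem compound_terms_match_general (L1 L2 : Lit) (σ : Subst)
    (hs1 : L1.simple) (hs2 : L2.simple)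
    (hcov1 : L1.covering) (hcov2 : L2.covering)
    (hc1 : L1.hasCompound) (hc2 : L2.hasCompound)
    (hmgu : Lit.isMGU σ L1 L2) :
    ∀ (p : ℕ) (t u : Term), L1.atom.args[p]? = some t → L2.atom.args[p]? = some u →
      (t.isCompound ↔ u.isCompound) := by
  intro p t u ht hu
  exact ⟨Lit.isCompound_of_unifies hs1 hs2 hcov1 hcov2 hc2 hmgu.1 ht hu,
    Lit.isCompound_of_unifies hs2 hs1 hcov2 hcov1 hc1 (Eq.symm hmgu.1) hu ht⟩

/-- Lemma C.4:  Let `L₁` and `L₂` be two non-ground, simple, covering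
literals, each containing a compound term, and unifiable by an mgu `σ`.  Then the
compound terms of `L₁` and `L₂` match each other:  an argument of `L₁` is a compound
term iff the argument of `L₂` at the same position is. -/
theorem compound_terms_match (L1 L2 : Lit) (σ : Subst)
    (hg1 : ¬ L1.ground) (hg2 : ¬ L2.ground)
    (hs1 : L1.simple) (hs2 : L2.simple)
    (hcov1 : L1.covering) (hcov2 : L2.covering)
    (hc1 : L1.hasCompound) (hc2 : L2.hasCompound)
    (hmgu : Lit.isMGU σ L1 L2) :
    ∀ (p : ℕ) (t u : Term), L1.atom.args[p]? = some t → L2.atom.args[p]? = some u →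
      (t.isCompound ↔ u.isCompound) :=
  compound_terms_match_general L1 L2 σ hs1 hs2 hcov1 hcov2 hc1 hc2 hmgu
end QGF
end

section
/- If the goal-oriented separation rule Sep is applicable to a query clause C ∨ A ∨ D — where A is a literal containing both isolated variables and chained variables, Var(C) ⊆ Var(A), x̄ = Var(A) ∩ Var(D), and d_s is a fresh predicate symbol — then the conclusion C ∨ A ∨ d_s(x̄) is a guarded clause and the conclusion ¬d_s(x̄) ∨ D is a query clause. -/
/-!
Common formalization of first-order clausal logic (without equality), following
"Resolution-based query answering and rewriting for the (loosely) guarded fragment".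
-/

set_option linter.unusedVariables false

namespace QGF

namespace Term

lemma hasVar_var_iff {x y : ℕ} : (var y).HasVar x ↔ x = y :=
  ⟨fun h => by cases h; rfl, fun h => h ▸ HasVar.var x⟩

lemma flatArg.not_isCompound {t : Term} (h : t.flatArg) : ¬ t.isCompound :=
  fun hc => h.elim hc.1 hc.2

lemma isConst.args_eq_nil {h : Head} {ts : List Term} (hc : (app h ts).isConst) : ts = [] := by
  cases h <;> cases ts <;> first | rfl | exact hc.elim

lemma flatArg.simpleArg {t : Term} (h : t.flatArg) : t.simpleArg := by
  cases t with
  | var x => trivial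
  | app hd ts =>
    rcases h with hv | hc
    · exact hv.elim
    · intro u hu
      simp [hc.args_eq_nil] at hu

lemma SubtermOf.eq_of_flatArg {s t : Term} (hs : s.SubtermOf t) (h : t.flatArg) : s = t := by
  cases hs with
  | refl => rfl
  | app hmem _ =>
    rcases h with hv | hc
    · exact hv.elim
    · simp [hc.args_eq_nil] at hmem

end Term

lemma Atom.vars_map_var (p : ℕ) (xs : List ℕ) :
    (Atom.mk p (xs.map Term.var)).vars = {x | x ∈ xs} := by
  ext x
  simp [Atom.vars, Term.vars, Term.hasVar_var_iff]

lemma Atom.flat_map_var (p : ℕ) (xs : List ℕ) : (Atom.mk p (xs.map Term.var)).flat := by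
  simp only [Atom.flat, List.mem_map]
  rintro _ ⟨y, _, rfl⟩
  exact Or.inl trivial

namespace Clause

@[simp] lemma vars_nil : vars [] = ∅ := by
  simp [vars]

lemma vars_cons (L : Lit) (C : Clause) : vars (L :: C) = L.vars ∪ vars C := by
  ext x
  simp [vars]

lemma vars_append (C D : Clause) : vars (C ++ D) = vars C ∪ vars D := by
  ext x
  simp [vars, or_and_right, exists_or]

lemma flat.simple {C : Clause} (h : C.flat) : C.simple :=
  fun L hL t ht => (h L hL t ht).simpleArg

lemma flat.covering {C : Clause} (h : C.flat) : C.covering := by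
  rintro t ⟨L, hL, u, hu, hsub⟩ hc
  have hu_flat := h L hL u hu
  rw [hsub.eq_of_flatArg hu_flat] at hc
  exact absurd hc hu_flat.not_isCompound

lemma guarded_of_flat_of_isGuardOf {C : Clause} {L : Lit} (hC : C.flat) (hL : L.isGuardOf C) :
    C.guarded :=
  ⟨hC.simple, hC.covering, Or.inr ⟨L, hL⟩⟩

end Clause

theorem sep_on_query_clause_general (C D : Clause) (A : Lit) (ds : ℕ) (xs : List ℕ)
    (hquery : Clause.query (C ++ A :: D))
    (hCA : Clause.vars C ⊆ A.vars)
    (hxs : {x | x ∈ xs} = A.vars ∩ Clause.vars D) :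
    Clause.guarded (C ++ A :: [Lit.mkPos ⟨ds, xs.map Term.var⟩]) ∧
    Clause.query (Lit.mkNeg ⟨ds, xs.map Term.var⟩ :: D) := by
  obtain ⟨hflat, hneg⟩ := hquery
  simp only [Clause.flat, List.forall_mem_append, List.forall_mem_cons] at hflat hneg
  have hdef_flat := Atom.flat_map_var ds xs
  have hdef_vars : Lit.vars (Lit.mkPos ⟨ds, xs.map Term.var⟩) ⊆ A.vars := by
    simp only [Lit.vars, Lit.mkPos, Atom.vars_map_var, hxs, Set.inter_subset_left]
  have hguard_vars : Clause.vars (C ++ A :: [Lit.mkPos ⟨ds, xs.map Term.var⟩]) = A.vars := by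
    rw [Clause.vars_append, Clause.vars_cons, Clause.vars_cons, Clause.vars_nil,
      Set.union_empty]
    exact subset_antisymm (Set.union_subset hCA (Set.union_subset le_rfl hdef_vars))
      (Set.subset_union_left.trans Set.subset_union_right)
  have hguard : A.isGuardOf (C ++ A :: [Lit.mkPos ⟨ds, xs.map Term.var⟩]) :=
    ⟨by simp, hneg.2.1, hflat.2.1, hguard_vars.symm⟩
  refine ⟨Clause.guarded_of_flat_of_isGuardOf ?_ hguard,
    List.forall_mem_cons.2 ⟨hdef_flat, hflat.2.2⟩, List.forall_mem_cons.2 ⟨rfl, hneg.2.2⟩⟩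
  simp only [Clause.flat, List.forall_mem_append, List.forall_mem_cons]
  exact ⟨hflat.1, hflat.2.1, hdef_flat, by simp⟩

/-- Lemma E.2:  If the goal-oriented separation rule Sep is applicable
to a query clause `C ∨ A ∨ D` — where the literal `A` contains both isolated and
chained variables, `Var(C) ⊆ Var(A)`, `x̄ = Var(A) ∩ Var(D)` and `d_s` is a fresh
predicate symbol — then the conclusion `C ∨ A ∨ d_s(x̄)` is a guarded clause and the
conclusion `¬d_s(x̄) ∨ D` is a query clause. -/
theorem sep_on_query_clause (C D : Clause) (A : Lit) (ds : ℕ) (xs : List ℕ)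
    (hquery : Clause.query (C ++ A :: D))
    (hiso : ∃ x ∈ A.vars, IsolatedVar (C ++ A :: D) x)
    (hchained : ∃ x ∈ A.vars, ChainedVar (C ++ A :: D) x)
    (hCA : Clause.vars C ⊆ A.vars)
    (hxs : {x | x ∈ xs} = A.vars ∩ Clause.vars D)
    (hfresh : ds ∉ Clause.preds (C ++ A :: D)) :
    Clause.guarded (C ++ A :: [Lit.mkPos ⟨ds, xs.map Term.var⟩]) ∧
    Clause.query (Lit.mkNeg ⟨ds, xs.map Term.var⟩ :: D) :=
  sep_on_query_clause_general C D A ds xs hquery hCA hxs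

end QGF
end

section
/- An indecomposable query clause is an isolated-only query clause if and only if it is a guarded clause. -/
/-!
Common formalization of first-order clausal logic (without equality), following
"Resolution-based query answering and rewriting for the (loosely) guarded fragment".
-/

set_option linter.unusedVariables false

namespace QGF

/-!
In an isolated-only clause a surface literal `L` shares no variable with a literal that is not
below it, so indecomposability puts every literal below `L`, and a flat negative `L` is a guard.
Conversely, a guard lies above every literal, so all surface literals have its variable set and
no variable can be chained.
-/

namespace Term

lemma SubtermOf.flatArg {s t : Term} (hst : s.SubtermOf t) (ht : t.flatArg) : s.flatArg := by
  cases hst with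
  | refl => exact ht
  | @app hd ts _ hmem _ =>
    rcases hd with _ | _ | _ <;> rcases ts with _ | _ <;> rcases ht with h | h <;>
      first | exact h.elim | exact absurd hmem List.not_mem_nil

end Term

namespace Clause

lemma not_indecomposable_of_vars_disjoint {C : Clause} (p : Lit → Bool) {L M : Lit}
    (hL : L ∈ C) (hpL : p L) (hM : M ∈ C) (hpM : ¬ p M)
    (hdisj : ∀ N ∈ C, ∀ N' ∈ C, p N → ¬ p N' → Disjoint N.vars N'.vars) :
    ¬ C.indecomposable := by
  refine not_not.mpr ⟨C.filter p, C.filter (fun N => !p N), ?_, ?_, ?_, ?_⟩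
  · exact List.ne_nil_of_mem (List.mem_filter.mpr ⟨hL, hpL⟩)
  · exact List.ne_nil_of_mem (List.mem_filter.mpr ⟨hM, by simpa using hpM⟩)
  · exact (Multiset.coe_eq_coe.mpr (List.filter_append_perm p C)).symm
  · refine Set.eq_empty_iff_forall_notMem.mpr ?_
    rintro x ⟨⟨N, hN, hxN⟩, ⟨N', hN', hxN'⟩⟩
    rw [List.mem_filter] at hN hN'
    exact Set.disjoint_left.mp (hdisj N hN.1 N' hN'.1 hN.2 (by simpa using hN'.2)) hxN hxN'

lemma isolatedOnly_of_ground {Q : Clause} (h : Q.ground) : Q.isolatedOnly :=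
  fun x hx => absurd (h ▸ hx) (Set.notMem_empty x)

end Clause

lemma exists_surfaceLit_vars_subset {Q : Clause} {M : Lit} (hM : M ∈ Q) :
    ∃ L, SurfaceLit Q L ∧ M.vars ⊆ L.vars := by
  have hfin : {L : Lit | L ∈ Q ∧ M.vars ⊆ L.vars}.Finite :=
    Q.finite_toSet.subset fun _ h => h.1
  obtain ⟨L, hL, hmax⟩ := hfin.exists_maximalFor Lit.vars _ ⟨M, hM, subset_rfl⟩
  refine ⟨L, ⟨hL.1, fun L' hL' hLL' => ?_⟩, hL.2⟩
  exact hLL'.ne (hLL'.subset.antisymm (hmax ⟨hL', hL.2.trans hLL'.subset⟩ hLL'.subset))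

namespace SurfaceLit

variable {Q : Clause} {L : Lit}

lemma vars_eq_of_vars_subset {G : Lit} (hL : SurfaceLit Q L) (hG : G ∈ Q)
    (hQG : Clause.vars Q ⊆ G.vars) : L.vars = G.vars := by
  have hLG : L.vars ⊆ G.vars := fun x hx => hQG ⟨L, hL.1, hx⟩
  exact hLG.eq_or_ssubset.resolve_right (hL.2 G hG)

/-- A surface literal above `M` would chain a shared variable with `L`. -/
lemma disjoint_vars_of_not_subset (hiso : Q.isolatedOnly) (hL : SurfaceLit Q L) {M : Lit}
    (hM : M ∈ Q) (hML : ¬ M.vars ⊆ L.vars) : Disjoint M.vars L.vars := by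
  refine Set.disjoint_left.mpr fun x hxM hxL => ?_
  obtain ⟨L', hL', hML'⟩ := exists_surfaceLit_vars_subset hM
  have hL'L : ¬ L'.vars ⊆ L.vars := fun h => hML (hML'.trans h)
  have hLL' : ¬ L.vars ⊆ L'.vars := fun h =>
    h.eq_or_ssubset.elim (fun he => hL'L he.ge) (hL.2 L' hL'.1)
  have hne : L ≠ L' := fun h => hL'L (h ▸ subset_rfl)
  exact hiso x ⟨M, hM, hxM⟩ ⟨L, L', hL, hL', hne, hLL', hL'L, hxL, hML' hxM⟩

lemma vars_subset_of_indecomposable (hind : Q.indecomposable) (hiso : Q.isolatedOnly)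
    (hL : SurfaceLit Q L) {M : Lit} (hM : M ∈ Q) : M.vars ⊆ L.vars := by
  classical
  by_contra hML
  refine Clause.not_indecomposable_of_vars_disjoint (fun N => decide (N.vars ⊆ L.vars))
    hL.1 (by simp) hM (by simpa using hML) ?_ hind
  intro N _ N' hN' hNL hN'L
  simp only [decide_eq_true_eq] at hNL hN'L
  exact ((hL.disjoint_vars_of_not_subset hiso hN' hN'L).mono_right hNL).symm

end SurfaceLit

lemma Clause.isolatedOnly_of_vars_subset {Q : Clause} {G : Lit} (hG : G ∈ Q)
    (hQG : Clause.vars Q ⊆ G.vars) : Q.isolatedOnly := by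
  rintro x - ⟨L, L', hL, hL', -, hLL', -, -, -⟩
  rw [hL.vars_eq_of_vars_subset hG hQG, hL'.vars_eq_of_vars_subset hG hQG] at hLL'
  exact hLL' subset_rfl

/-- Lemma E.3:  An indecomposable query clause is an isolated-only
query clause if and only if it is a guarded clause. -/
theorem isolatedOnly_iff_guarded (Q : Clause)
    (hquery : Clause.query Q) (hind : Clause.indecomposable Q) :
    Clause.isolatedOnly Q ↔ Clause.guarded Q := by
  constructor
  · intro hiso
    refine ⟨hquery.1.simple, hquery.1.covering, ?_⟩
    rcases eq_or_ne Q [] with rfl | hne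
    · left
      simp [Clause.ground, Clause.vars]
    obtain ⟨L, hL, -⟩ := exists_surfaceLit_vars_subset (List.head_mem hne)
    refine Or.inr ⟨L, hL.1, hquery.2 L hL.1, hquery.1 L hL.1, ?_⟩
    refine subset_antisymm (fun x hx => ⟨L, hL.1, hx⟩) ?_
    rintro x ⟨M, hM, hx⟩
    exact hL.vars_subset_of_indecomposable hind hiso hM hx
  · rintro ⟨-, -, hground | ⟨G, hG, -, -, hGvars⟩⟩
    · exact Clause.isolatedOnly_of_ground hground
    · exact Clause.isolatedOnly_of_vars_subset hG hGvars.ge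
end QGF
end
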